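/- arXiv:2201.08576 — 2 statements merged into one kernel-verified Lean document; each statement's English description precedes it below -/
import Mathlib

section
/- Let p be a point sphere complex. Let r, s, ŝ be isotropic vectors with ⟨r,s⟩ = ⟨r,ŝ⟩ = 0 (so f = span{r,s} and f̂ = span{r,ŝ} are contact elements sharing the common sphere r), and let p₁ ∈ span{r,s} and p̂₁ ∈ span{r,ŝ} be nonzero isotropic vectors with ⟨p₁,p⟩ = ⟨p̂₁,p⟩ = 0, p₁ ∉ span{r} and p̂₁ ∉ span{r} (the point spheres of the two contact elements). Assume that γ := span{p₁, p̂₁, r + ⟨r,p⟩p} is 3-dimensional and the induced form on γ has signature (2,1), so that γ is a circle. Then an isotropic vector w ∈ ℝ^{4,2} is orthogonal to the circle γ — i.e. ⟨w, v + ⟨v,p⟩p⟩ = 0 for every isotropic v ∈ γ^⊥ — if and only if w lies in the 4-dimensional subspace span{r, s, ŝ, p}. -/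
noncomputable section

/-- The symmetric bilinear form of signature (4,2) on ℝ⁶, modelling ℝ^{4,2}. -/
def B (x y : Fin 6 → ℝ) : ℝ :=
  x 0 * y 0 + x 1 * y 1 + x 2 * y 2 + x 3 * y 3 - x 4 * y 4 - x 5 * y 5

/-- The induced form on the subspace `W` has signature (2,1) (it admits a
spanning pseudo-orthonormal triple of Gram matrix diag(1,1,-1)); in particular
`W` is 3-dimensional. -/
def SigTwoOne (W : Submodule ℝ (Fin 6 → ℝ)) : Prop :=
  ∃ u v w : Fin 6 → ℝ, Submodule.span ℝ ({u, v, w} : Set (Fin 6 → ℝ)) = W ∧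
    B u u = 1 ∧ B v v = 1 ∧ B w w = -1 ∧ B u v = 0 ∧ B u w = 0 ∧ B v w = 0

/-! For `v ⊥ γ`, the vector `v + ⟨v,p⟩p` is orthogonal to `p`, to `r` and to the point spheres
`p₁, p̂₁`, hence also to `s` and `ŝ`; so every `w ∈ span {r, s, ŝ, p}` is orthogonal to `γ`.

Conversely, if `w` is orthogonal to `γ`, then `w + ⟨w,p⟩p` is orthogonal to every isotropic
vector of `γᗮ`. As `γ` has signature (2,1), so has `γᗮ` (a dimension count in the positive 4-plane
and the negative 2-plane of coordinates, followed by projection onto `γᗮ`). Hence `γᗮ` contains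
a hyperbolic pair and is spanned by its isotropic vectors, so `w + ⟨w,p⟩p ∈ γᗮᗮ = γ`, and
`w ∈ γ + ℝp ⊆ span {r, s, ŝ, p}`. -/

open Submodule (span subset_span mem_span_pair mem_span_singleton_self)
open LinearMap (BilinForm)

lemma B_symm (x y : Fin 6 → ℝ) : B x y = B y x := by simp only [B]; ring

@[simp] lemma B_add_left (x y z : Fin 6 → ℝ) : B (x + y) z = B x z + B y z := by
  simp only [B, Pi.add_apply]; ring

@[simp] lemma B_add_right (x y z : Fin 6 → ℝ) : B x (y + z) = B x y + B x z := by
  simp only [B, Pi.add_apply]; ring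

@[simp] lemma B_sub_left (x y z : Fin 6 → ℝ) : B (x - y) z = B x z - B y z := by
  simp only [B, Pi.sub_apply]; ring

@[simp] lemma B_sub_right (x y z : Fin 6 → ℝ) : B x (y - z) = B x y - B x z := by
  simp only [B, Pi.sub_apply]; ring

@[simp] lemma B_smul_left (a : ℝ) (x y : Fin 6 → ℝ) : B (a • x) y = a * B x y := by
  simp only [B, Pi.smul_apply, smul_eq_mul]; ring

@[simp] lemma B_smul_right (a : ℝ) (x y : Fin 6 → ℝ) : B x (a • y) = a * B x y := by
  simp only [B, Pi.smul_apply, smul_eq_mul]; ring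

@[simp] lemma B_zero_left (y : Fin 6 → ℝ) : B 0 y = 0 := by simp [B]

@[simp] lemma B_zero_right (x : Fin 6 → ℝ) : B x 0 = 0 := by simp [B]

def bilinB : BilinForm ℝ (Fin 6 → ℝ) :=
  LinearMap.mk₂ ℝ B B_add_left B_smul_left B_add_right B_smul_right

lemma eq_zero_of_forall_B_eq_zero {x : Fin 6 → ℝ} (h : ∀ y, B x y = 0) : x = 0 := by
  funext i
  have := h (Pi.single i 1)
  fin_cases i <;> simpa [B] using this

lemma mem_orthogonal_iff_B {N : Submodule ℝ (Fin 6 → ℝ)} {y : Fin 6 → ℝ} :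
    y ∈ bilinB.orthogonal N ↔ ∀ x ∈ N, B y x = 0 := by
  simp only [BilinForm.mem_orthogonal_iff, bilinB, LinearMap.mk₂_apply,
    B_symm y]

lemma mem_orthogonal_span_iff {S : Set (Fin 6 → ℝ)} {y : Fin 6 → ℝ} :
    y ∈ bilinB.orthogonal (span ℝ S) ↔ ∀ x ∈ S, B y x = 0 := by
  rw [mem_orthogonal_iff_B]
  refine ⟨fun h x hx => h x (subset_span hx), fun h x hx => ?_⟩
  induction hx using Submodule.span_induction with
  | mem x hx => exact h x hx
  | zero => exact B_zero_right y
  | add a b _ _ ha hb => rw [B_add_right, ha, hb, add_zero]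
  | smul t a _ ha => rw [B_smul_right, ha, mul_zero]

lemma B_add_B_smul_comm (p x y : Fin 6 → ℝ) : B (x + B x p • p) y = B x (y + B y p • p) := by
  simp only [B_add_left, B_add_right, B_smul_left, B_smul_right, B_symm p]; ring

lemma B_eq_zero_of_mem_span_pair {r s a x : Fin 6 → ℝ} (ha : a ∈ span ℝ {r, s})
    (har : a ∉ span ℝ {r}) (hxr : B x r = 0) (hxa : B x a = 0) : B x s = 0 := by
  obtain ⟨α, β, rfl⟩ := mem_span_pair.mp ha
  have hβ : β ≠ 0 := by
    rintro rfl
    exact har (by simpa using Submodule.smul_mem _ α (mem_span_singleton_self r))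
  simp only [B_add_right, B_smul_right, hxr, mul_zero, zero_add] at hxa
  exact (mul_eq_zero.mp hxa).resolve_left hβ

lemma B_add_B_smul_eq_zero_of_mem_span_pair {p r s a v : Fin 6 → ℝ} (ha : a ∈ span ℝ {r, s})
    (har : a ∉ span ℝ {r}) (hap : B a p = 0) (hvr : B v (r + B r p • p) = 0)
    (hva : B v a = 0) : B (v + B v p • p) s = 0 :=
  B_eq_zero_of_mem_span_pair ha har (by rwa [B_add_B_smul_comm])
    (by rwa [B_add_B_smul_comm, hap, zero_smul, add_zero])

lemma exists_ne_zero_forall_B_eq_zero {k l : ℕ} (hlk : l < k)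
    (e : (Fin k → ℝ) →ₗ[ℝ] Fin 6 → ℝ) (g : Fin l → Fin 6 → ℝ) :
    ∃ c ≠ 0, ∀ i, B (e c) (g i) = 0 := by
  let f : (Fin k → ℝ) →ₗ[ℝ] Fin l → ℝ := LinearMap.pi fun i => bilinB.flip (g i) ∘ₗ e
  have hker : LinearMap.ker f ≠ ⊥ := LinearMap.ker_ne_bot_of_finrank_lt (by simpa using hlk)
  obtain ⟨c, hc, hc0⟩ := Submodule.exists_mem_ne_zero_of_ne_bot hker
  exact ⟨c, hc0, fun i => congrFun hc i⟩

lemma dotProduct_self_pos {k : ℕ} {c : Fin k → ℝ} (hc : c ≠ 0) : 0 < c ⬝ᵥ c :=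
  lt_of_le_of_ne (Finset.sum_nonneg fun i _ => mul_self_nonneg (c i))
    (Ne.symm (dotProduct_self_eq_zero.not.mpr hc))

def posCoords : (Fin 4 → ℝ) →ₗ[ℝ] Fin 6 → ℝ where
  toFun c := ![c 0, c 1, c 2, c 3, 0, 0]
  map_add' _ _ := by ext i; fin_cases i <;> simp
  map_smul' _ _ := by ext i; fin_cases i <;> simp

def negCoords : (Fin 2 → ℝ) →ₗ[ℝ] Fin 6 → ℝ where
  toFun c := ![0, 0, 0, 0, c 0, c 1]
  map_add' _ _ := by ext i; fin_cases i <;> simp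
  map_smul' _ _ := by ext i; fin_cases i <;> simp

lemma B_posCoords_self (c : Fin 4 → ℝ) : B (posCoords c) (posCoords c) = c ⬝ᵥ c := by
  simp [posCoords, B, dotProduct, Fin.sum_univ_four]

lemma B_negCoords_self (c : Fin 2 → ℝ) : B (negCoords c) (negCoords c) = -(c ⬝ᵥ c) := by
  simp [negCoords, B, dotProduct, Fin.sum_univ_two]; ring

section Isotropic

variable {U : Submodule ℝ (Fin 6 → ℝ)}

lemma exists_isotropic_of_pos_of_neg {q z : Fin 6 → ℝ} (hq : q ∈ U) (hz : z ∈ U)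
    (hqq : 0 < B q q) (hzz : B z z < 0) : ∃ n ∈ U, n ≠ 0 ∧ B n n = 0 := by
  obtain ⟨t, ht⟩ : ∃ t, B z z * (t * t) + 2 * B q z * t + B q q = 0 := by
    refine exists_quadratic_eq_zero hzz.ne ⟨√(discrim (B z z) (2 * B q z) (B q q)),
      (Real.mul_self_sqrt ?_).symm⟩
    unfold discrim
    nlinarith [sq_nonneg (B q z)]
  refine ⟨q + t • z, add_mem hq (U.smul_mem t hz), fun h0 => ?_, ?_⟩
  · have : B q q = t * t * B z z := by
      rw [eq_neg_of_add_eq_zero_left h0, ← neg_smul, B_smul_left, B_smul_right]; ring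
    nlinarith [mul_self_nonneg t]
  · simp only [B_add_left, B_add_right, B_smul_left, B_smul_right, B_symm z q]
    linear_combination ht

lemma exists_hyperbolic_partner {n m₀ : Fin 6 → ℝ} (hn : n ∈ U) (hm₀ : m₀ ∈ U)
    (hnn : B n n = 0) (hnm₀ : B n m₀ ≠ 0) : ∃ m ∈ U, B m m = 0 ∧ B n m = 1 := by
  refine ⟨(B n m₀)⁻¹ • m₀ - (B m₀ m₀ / (2 * B n m₀ ^ 2)) • n,
    sub_mem (U.smul_mem _ hm₀) (U.smul_mem _ hn), ?_, ?_⟩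
  · simp only [B_sub_left, B_sub_right, B_smul_left, B_smul_right, hnn, B_symm m₀ n]
    field_simp
    ring
  · simp only [B_sub_right, B_smul_right, hnn]
    field_simp
    ring

lemma B_eq_zero_of_forall_isotropic {n m x : Fin 6 → ℝ} (hn : n ∈ U) (hm : m ∈ U)
    (hnn : B n n = 0) (hmm : B m m = 0) (hnm : B n m = 1)
    (hx : ∀ y ∈ U, B y y = 0 → y ≠ 0 → B x y = 0) : ∀ y ∈ U, B x y = 0 := by
  have hxn : B x n = 0 := hx n hn hnn (by rintro rfl; simp at hnm)
  have hxm : B x m = 0 := hx m hm hmm (by rintro rfl; simp at hnm)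
  intro y hy
  set t := 1 - B y m
  set b := -(B y y + 2 * t * B y n) / 2
  have hv : y + t • n + b • m ∈ U := add_mem (add_mem hy (U.smul_mem t hn)) (U.smul_mem b hm)
  have hvv : B (y + t • n + b • m) (y + t • n + b • m) = 0 := by
    simp only [B_add_left, B_add_right, B_smul_left, B_smul_right, hnn, hmm, hnm, B_symm n y,
      B_symm m y, B_symm m n]
    ring
  have hxv : B x (y + t • n + b • m) = 0 := by
    rcases eq_or_ne (y + t • n + b • m) 0 with h0 | h0
    · rw [h0, B_zero_right]
    · exact hx _ hv hvv h0
  simpa [hxn, hxm] using hxv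

end Isotropic

structure IsPseudoOrthonormal (u v w : Fin 6 → ℝ) : Prop where
  uu : B u u = 1
  vv : B v v = 1
  ww : B w w = -1
  uv : B u v = 0
  uw : B u w = 0
  vw : B v w = 0

-- The `B`-orthogonal projection onto `(span {u, v, w})ᗮ`; the sign of the last term is
-- that of `B w w = -1`.
def perpProj (u v w x : Fin 6 → ℝ) : Fin 6 → ℝ := x - B x u • u - B x v • v + B x w • w

lemma B_perpProj_left (u v w x y : Fin 6 → ℝ) :
    B (perpProj u v w x) y = B x (perpProj u v w y) := by
  simp only [perpProj, B_add_left, B_sub_left, B_smul_left, B_add_right, B_sub_right,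
    B_smul_right, B_symm u y, B_symm v y, B_symm w y]
  ring

lemma perpProj_of_mem_orthogonal {u v w x : Fin 6 → ℝ}
    (hx : x ∈ bilinB.orthogonal (span ℝ {u, v, w})) : perpProj u v w x = x := by
  simp only [mem_orthogonal_span_iff, Set.mem_insert_iff, Set.mem_singleton_iff,
    forall_eq_or_imp, forall_eq] at hx
  simp [perpProj, hx.1, hx.2.1, hx.2.2]

namespace IsPseudoOrthonormal

variable {u v w : Fin 6 → ℝ} (h : IsPseudoOrthonormal u v w)
include h

lemma perpProj_mem_orthogonal (x : Fin 6 → ℝ) :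
    perpProj u v w x ∈ bilinB.orthogonal (span ℝ {u, v, w}) := by
  simp only [mem_orthogonal_span_iff, Set.mem_insert_iff, Set.mem_singleton_iff,
    forall_eq_or_imp, forall_eq, perpProj, B_add_left, B_sub_left, B_smul_left, h.uu, h.vv,
    h.ww, h.uv, h.uw, h.vw, B_symm v u, B_symm w u, B_symm w v]
  refine ⟨?_, ?_, ?_⟩ <;> ring

lemma B_perpProj_self (x : Fin 6 → ℝ) :
    B (perpProj u v w x) (perpProj u v w x) = B x x - B x u ^ 2 - B x v ^ 2 + B x w ^ 2 := by
  simp only [perpProj, B_add_left, B_sub_left, B_smul_left, B_add_right, B_sub_right,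
    B_smul_right, h.uu, h.vv, h.ww, h.uv, h.uw, h.vw, B_symm v u, B_symm w u, B_symm w v,
    B_symm u x, B_symm v x, B_symm w x]
  ring

lemma perpProj_eq_zero {x : Fin 6 → ℝ}
    (hx : ∀ y ∈ bilinB.orthogonal (span ℝ {u, v, w}), B x y = 0) : perpProj u v w x = 0 :=
  eq_zero_of_forall_B_eq_zero fun y => by
    rw [B_perpProj_left]; exact hx _ (h.perpProj_mem_orthogonal y)

lemma mem_span_of_forall_orthogonal {x : Fin 6 → ℝ}
    (hx : ∀ y ∈ bilinB.orthogonal (span ℝ {u, v, w}), B x y = 0) : x ∈ span ℝ {u, v, w} := by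
  have hx0 := h.perpProj_eq_zero hx
  have hx_eq : x = B x u • u + B x v • v - B x w • w := by
    rw [← sub_eq_zero, ← hx0, perpProj]; module
  rw [hx_eq]
  have mem : ∀ a ∈ ({u, v, w} : Set (Fin 6 → ℝ)), ∀ c : ℝ, c • a ∈ span ℝ {u, v, w} :=
    fun a ha c => Submodule.smul_mem _ c (subset_span ha)
  exact sub_mem (add_mem (mem u (by simp) _) (mem v (by simp) _)) (mem w (by simp) _)

lemma exists_neg_mem_orthogonal : ∃ z ∈ bilinB.orthogonal (span ℝ {u, v, w}), B z z < 0 := by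
  obtain ⟨c, hc0, hc⟩ := exists_ne_zero_forall_B_eq_zero (by norm_num) negCoords ![w]
  refine ⟨_, h.perpProj_mem_orthogonal (negCoords c), ?_⟩
  rw [h.B_perpProj_self, B_negCoords_self, show B (negCoords c) w = 0 from hc 0]
  nlinarith [dotProduct_self_pos hc0]

lemma exists_pos_mem_orthogonal : ∃ q ∈ bilinB.orthogonal (span ℝ {u, v, w}), 0 < B q q := by
  obtain ⟨c, hc0, hc⟩ := exists_ne_zero_forall_B_eq_zero (by norm_num) posCoords ![u, v]
  refine ⟨_, h.perpProj_mem_orthogonal (posCoords c), ?_⟩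
  rw [h.B_perpProj_self, B_posCoords_self, show B (posCoords c) u = 0 from hc 0,
    show B (posCoords c) v = 0 from hc 1]
  nlinarith [dotProduct_self_pos hc0]

lemma exists_hyperbolic_pair : ∃ n ∈ bilinB.orthogonal (span ℝ {u, v, w}),
    ∃ m ∈ bilinB.orthogonal (span ℝ {u, v, w}), B n n = 0 ∧ B m m = 0 ∧ B n m = 1 := by
  obtain ⟨z, hz, hzz⟩ := h.exists_neg_mem_orthogonal
  obtain ⟨q, hq, hqq⟩ := h.exists_pos_mem_orthogonal
  obtain ⟨n, hn, hn0, hnn⟩ := exists_isotropic_of_pos_of_neg hq hz hqq hzz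
  obtain ⟨m₀, hm₀, hnm₀⟩ : ∃ m₀ ∈ bilinB.orthogonal (span ℝ {u, v, w}), B n m₀ ≠ 0 := by
    by_contra! hcon
    -- otherwise `n` lies in both `span {u, v, w}` and its orthogonal, which meet in `0`
    exact hn0 (perpProj_of_mem_orthogonal hn ▸ h.perpProj_eq_zero hcon)
  obtain ⟨m, hm, hmm, hnm⟩ := exists_hyperbolic_partner hn hm₀ hnn hnm₀
  exact ⟨n, hn, m, hm, hnn, hmm, hnm⟩

lemma mem_span_of_forall_isotropic {x : Fin 6 → ℝ}
    (hx : ∀ y ∈ bilinB.orthogonal (span ℝ {u, v, w}), B y y = 0 → y ≠ 0 → B x y = 0) :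
    x ∈ span ℝ {u, v, w} := by
  obtain ⟨n, hn, m, hm, hnn, hmm, hnm⟩ := h.exists_hyperbolic_pair
  exact h.mem_span_of_forall_orthogonal (B_eq_zero_of_forall_isotropic hn hm hnn hmm hnm hx)

end IsPseudoOrthonormal

lemma SigTwoOne.add_B_smul_mem {γ : Submodule ℝ (Fin 6 → ℝ)} (hsig : SigTwoOne γ)
    {p w : Fin 6 → ℝ} (H : ∀ v : Fin 6 → ℝ, B v v = 0 → v ≠ 0 → (∀ x ∈ γ, B v x = 0) →
      B w (v + B v p • p) = 0) : w + B w p • p ∈ γ := by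
  obtain ⟨e₁, e₂, e₃, rfl, h₁₁, h₂₂, h₃₃, h₁₂, h₁₃, h₂₃⟩ := hsig
  refine IsPseudoOrthonormal.mem_span_of_forall_isotropic ⟨h₁₁, h₂₂, h₃₃, h₁₂, h₁₃, h₂₃⟩
    fun y hy hyy hy0 => ?_
  rw [B_add_B_smul_comm]
  exact H y hyy hy0 (mem_orthogonal_iff_B.mp hy)

theorem stmt_3_general (p r s s' p₁ p₁' : Fin 6 → ℝ) (hp : B p p = -1)
    (hp₁p : B p₁ p = 0)
    (hp₁mem : p₁ ∈ Submodule.span ℝ ({r, s} : Set (Fin 6 → ℝ)))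
    (hp₁r : p₁ ∉ Submodule.span ℝ ({r} : Set (Fin 6 → ℝ)))
    (hp₁'p : B p₁' p = 0)
    (hp₁'mem : p₁' ∈ Submodule.span ℝ ({r, s'} : Set (Fin 6 → ℝ)))
    (hp₁'r : p₁' ∉ Submodule.span ℝ ({r} : Set (Fin 6 → ℝ)))
    (γ : Submodule ℝ (Fin 6 → ℝ))
    (hγ : γ = Submodule.span ℝ ({p₁, p₁', r + B r p • p} : Set (Fin 6 → ℝ)))
    (hsig : SigTwoOne γ)
    (w : Fin 6 → ℝ) :
    (∀ v : Fin 6 → ℝ, B v v = 0 → v ≠ 0 → (∀ x ∈ γ, B v x = 0) →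
        B w (v + B v p • p) = 0) ↔
      w ∈ Submodule.span ℝ ({r, s, s', p} : Set (Fin 6 → ℝ)) := by
  have hpP : p ∈ span ℝ {r, s, s', p} := subset_span (by simp)
  constructor
  · intro H
    have hγP : γ ≤ span ℝ {r, s, s', p} := by
      rw [hγ, Submodule.span_le, Set.insert_subset_iff, Set.insert_subset_iff,
        Set.singleton_subset_iff]
      exact ⟨Submodule.span_mono (by simp [Set.insert_subset_iff]) hp₁mem,
        Submodule.span_mono (by simp [Set.insert_subset_iff]) hp₁'mem,
        add_mem (subset_span (by simp)) (Submodule.smul_mem _ _ hpP)⟩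
    simpa using sub_mem (hγP (hsig.add_B_smul_mem H)) (Submodule.smul_mem _ (B w p) hpP)
  · intro hw v _ _ hvγ
    have hvr : B v (r + B r p • p) = 0 := hvγ _ (hγ ▸ subset_span (by simp))
    have hv' : v + B v p • p ∈ bilinB.orthogonal (span ℝ {r, s, s', p}) := by
      simp only [mem_orthogonal_span_iff, Set.mem_insert_iff, Set.mem_singleton_iff,
        forall_eq_or_imp, forall_eq]
      refine ⟨by rwa [B_add_B_smul_comm], ?_, ?_, by simp [hp]⟩
      · exact B_add_B_smul_eq_zero_of_mem_span_pair hp₁mem hp₁r hp₁p hvr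
          (hvγ _ (hγ ▸ subset_span (by simp)))
      · exact B_add_B_smul_eq_zero_of_mem_span_pair hp₁'mem hp₁'r hp₁'p hvr
          (hvγ _ (hγ ▸ subset_span (by simp)))
    rw [B_symm]
    exact mem_orthogonal_iff_B.mp hv' w hw

/-- Given two contact elements `f = span{r,s}` and
`f' = span{r,s'}` sharing the common sphere `r`, with point spheres `p₁, p₁'`,
the spheres orthogonal to the circle `γ = span{p₁, p₁', r + ⟨r,p⟩p}` are
exactly the isotropic vectors of the 4-dimensional subspace `span{r,s,s',p}`. -/
theorem stmt_3 (p r s s' p₁ p₁' : Fin 6 → ℝ) (hp : B p p = -1)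
    (hr : r ≠ 0) (ir : B r r = 0) (hs : s ≠ 0) (is1 : B s s = 0)
    (hs' : s' ≠ 0) (is2 : B s' s' = 0)
    (hrs : B r s = 0) (hrs' : B r s' = 0)
    (hp₁ : p₁ ≠ 0) (ip₁ : B p₁ p₁ = 0) (hp₁p : B p₁ p = 0)
    (hp₁mem : p₁ ∈ Submodule.span ℝ ({r, s} : Set (Fin 6 → ℝ)))
    (hp₁r : p₁ ∉ Submodule.span ℝ ({r} : Set (Fin 6 → ℝ)))
    (hp₁' : p₁' ≠ 0) (ip₁' : B p₁' p₁' = 0) (hp₁'p : B p₁' p = 0)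
    (hp₁'mem : p₁' ∈ Submodule.span ℝ ({r, s'} : Set (Fin 6 → ℝ)))
    (hp₁'r : p₁' ∉ Submodule.span ℝ ({r} : Set (Fin 6 → ℝ)))
    (γ : Submodule ℝ (Fin 6 → ℝ))
    (hγ : γ = Submodule.span ℝ ({p₁, p₁', r + B r p • p} : Set (Fin 6 → ℝ)))
    (hdim : Module.finrank ℝ γ = 3) (hsig : SigTwoOne γ)
    (w : Fin 6 → ℝ) (hw : w ≠ 0) (iw : B w w = 0) :
    (∀ v : Fin 6 → ℝ, B v v = 0 → v ≠ 0 → (∀ x ∈ γ, B v x = 0) →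
        B w (v + B v p • p) = 0) ↔
      w ∈ Submodule.span ℝ ({r, s, s', p} : Set (Fin 6 → ℝ)) :=
  stmt_3_general p r s s' p₁ p₁' hp hp₁p hp₁mem hp₁r hp₁'p hp₁'mem hp₁'r γ hγ hsig w
end
end

section
/- Let p be a point sphere complex, σ_a an M-Lie inversion (i.e. ⟨a,a⟩ ≠ 0 and ⟨a,p⟩ = 0), and let x₁, x₂ be point spheres (isotropic vectors with ⟨x₁,p⟩ = ⟨x₂,p⟩ = 0). Then the four point spheres x₁, x₂, σ_a(x₁), σ_a(x₂) all lie in the subspace span{x₁, x₂, a}, which has dimension at most 3 and is orthogonal to p. Hence four point spheres related pairwise by an M-Lie inversion lie in a 3-dimensional subspace orthogonal to p and are therefore concircular. -/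
noncomputable section

/-- The Lie inversion with respect to the linear sphere complex `a`. -/
def lieInv (a x : Fin 6 → ℝ) : Fin 6 → ℝ :=
  x - (2 * B x a / B a a) • a

def B.leftLinear (p : Fin 6 → ℝ) : (Fin 6 → ℝ) →ₗ[ℝ] ℝ where
  toFun x := B x p
  map_add' x y := by simp only [B, Pi.add_apply]; ring
  map_smul' c x := by simp only [B, Pi.smul_apply, smul_eq_mul, RingHom.id_apply]; ring

lemma B_eq_zero_of_mem_span {s : Set (Fin 6 → ℝ)} {p : Fin 6 → ℝ} (hs : ∀ y ∈ s, B y p = 0)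
    {x : Fin 6 → ℝ} (hx : x ∈ Submodule.span ℝ s) : B x p = 0 :=
  (Submodule.span_le (p := LinearMap.ker (B.leftLinear p)) |>.mpr hs) hx

lemma lieInv_mem {W : Submodule ℝ (Fin 6 → ℝ)} {a x : Fin 6 → ℝ} (ha : a ∈ W) (hx : x ∈ W) :
    lieInv a x ∈ W :=
  W.sub_mem hx (W.smul_mem _ ha)

lemma finrank_span_triple_le {K V : Type*} [DivisionRing K] [AddCommGroup V] [Module K V]
    (u v w : V) : Module.finrank K (Submodule.span K ({u, v, w} : Set V)) ≤ 3 := by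
  classical
  have h := finrank_span_finset_le_card (R := K) ({u, v, w} : Finset V)
  push_cast at h
  exact h.trans Finset.card_le_three

theorem stmt_13_general (p a x₁ x₂ : Fin 6 → ℝ)
    (hap : B a p = 0)
    (hx₁p : B x₁ p = 0)
    (hx₂p : B x₂ p = 0)
    (W : Submodule ℝ (Fin 6 → ℝ))
    (hW : W = Submodule.span ℝ ({x₁, x₂, a} : Set (Fin 6 → ℝ))) :
    x₁ ∈ W ∧ x₂ ∈ W ∧ lieInv a x₁ ∈ W ∧ lieInv a x₂ ∈ W ∧
    Module.finrank ℝ W ≤ 3 ∧ (∀ x ∈ W, B x p = 0) := by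
  subst hW
  have h₁ : x₁ ∈ Submodule.span ℝ ({x₁, x₂, a} : Set (Fin 6 → ℝ)) := Submodule.subset_span (by simp)
  have h₂ : x₂ ∈ Submodule.span ℝ ({x₁, x₂, a} : Set (Fin 6 → ℝ)) := Submodule.subset_span (by simp)
  have hₐ : a ∈ Submodule.span ℝ ({x₁, x₂, a} : Set (Fin 6 → ℝ)) := Submodule.subset_span (by simp)
  refine ⟨h₁, h₂, lieInv_mem hₐ h₁, lieInv_mem hₐ h₂, finrank_span_triple_le x₁ x₂ a, ?_⟩
  intro x hx
  refine B_eq_zero_of_mem_span ?_ hx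
  rintro y (rfl | rfl | rfl) <;> assumption

/-- For an M-Lie inversion `σ_a` and point spheres `x₁, x₂`,
the four point spheres `x₁, x₂, σ_a(x₁), σ_a(x₂)` lie in the subspace
`span{x₁, x₂, a}`, which has dimension at most 3 and is orthogonal to `p`;
hence the four point spheres are concircular. -/
theorem stmt_13 (p a x₁ x₂ : Fin 6 → ℝ) (hp : B p p = -1)
    (ha : B a a ≠ 0) (hap : B a p = 0)
    (hx₁ : x₁ ≠ 0) (ix₁ : B x₁ x₁ = 0) (hx₁p : B x₁ p = 0)
    (hx₂ : x₂ ≠ 0) (ix₂ : B x₂ x₂ = 0) (hx₂p : B x₂ p = 0)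
    (W : Submodule ℝ (Fin 6 → ℝ))
    (hW : W = Submodule.span ℝ ({x₁, x₂, a} : Set (Fin 6 → ℝ))) :
    x₁ ∈ W ∧ x₂ ∈ W ∧ lieInv a x₁ ∈ W ∧ lieInv a x₂ ∈ W ∧
    Module.finrank ℝ W ≤ 3 ∧ (∀ x ∈ W, B x p = 0) :=
  stmt_13_general p a x₁ x₂ hap hx₁p hx₂p W hW
end
end
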